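/- Let G be a strictly chordal graph and S a minimal vertex separator of G with |S| ≥ 2. If v ∈ S has degree d(v), then d(v) + 1 is a Laplacian eigenvalue of L(G) with multiplicity at least |S| - 1. -/

import Mathlib

/-!
Two distinct vertices `a, b` of a minimal separator `S` of a strictly chordal graph are true twins.
A neighbour `x ∉ S` of `a` is adjacent to `b`: otherwise a minimal separator of `x` from a full
component of `G - S` can be found inside `N(x)`; it differs from `S`, yet must contain `a`.
And `a ~ b`: otherwise `a` and `b` together with neighbours of `b` in two different full components
of `G - S` form an induced 4-cycle. For true twins `a, b` the vector `e_a - e_b` is a Laplacian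
eigenvector with eigenvalue `d(a) + 1`, and the `|S| - 1` vectors `e_v - e_w` (`w ∈ S \ {v}`) are
linearly independent.
-/

open SimpleGraph Matrix

/-- `S` separates `u` and `v` in `G`: every walk from `u` to `v` meets `S`. -/
def Separates {V : Type*} (G : SimpleGraph V) (u v : V) (S : Set V) : Prop :=
  ∀ p : G.Walk u v, ∃ x ∈ p.support, x ∈ S

/-- `S` is a minimal `uv`-separator. -/
def IsMinimalUVSeparator {V : Type*} (G : SimpleGraph V) (u v : V) (S : Set V) : Prop :=
  u ≠ v ∧ ¬ G.Adj u v ∧ u ∉ S ∧ v ∉ S ∧ Separates G u v S ∧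
    ∀ S' ⊂ S, ¬ Separates G u v S'

/-- `S` is a minimal vertex separator: a minimal `uv`-separator for some non-adjacent pair. -/
def IsMinimalVertexSeparator {V : Type*} (G : SimpleGraph V) (S : Set V) : Prop :=
  ∃ u v, IsMinimalUVSeparator G u v S

/-- `G` is chordal: it has no induced cycle of length at least 4. -/
def Chordal {V : Type*} (G : SimpleGraph V) : Prop :=
  ∀ n, 4 ≤ n → ¬ ∃ f : Fin n ↪ V, ∀ a b, (SimpleGraph.cycleGraph n).Adj a b ↔ G.Adj (f a) (f b)

/-- `G` is strictly chordal: chordal with pairwise disjoint minimal vertex separators. -/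
def StrictlyChordal {V : Type*} (G : SimpleGraph V) : Prop :=
  Chordal G ∧ ∀ S S' : Set V, IsMinimalVertexSeparator G S →
    IsMinimalVertexSeparator G S' → S ≠ S' → Disjoint S S'
/-- The multiplicity of `μ` as a Laplacian eigenvalue of `G`. -/
noncomputable def lapMult {V : Type*} [Fintype V] [DecidableEq V] (G : SimpleGraph V)
    [DecidableRel G.Adj] (μ : ℝ) : ℕ :=
  Module.finrank ℝ (Module.End.eigenspace (Matrix.toLin' (G.lapMatrix ℝ)) μ)

section

variable {V : Type*} {G : SimpleGraph V}

def ReachableAvoiding (G : SimpleGraph V) (S : Set V) (x y : V) : Prop :=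
  ∃ p : G.Walk x y, ∀ z ∈ p.support, z ∉ S

namespace ReachableAvoiding

variable {S : Set V} {x y z : V}

lemma refl (hx : x ∉ S) : ReachableAvoiding G S x x :=
  ⟨Walk.nil, by simpa using hx⟩

lemma cons (h : ReachableAvoiding G S x y) (hzx : G.Adj z x) (hz : z ∉ S) :
    ReachableAvoiding G S z y := by
  obtain ⟨p, hp⟩ := h
  exact ⟨Walk.cons hzx p, by simpa [Walk.support_cons] using ⟨hz, hp⟩⟩

lemma notMem_left (h : ReachableAvoiding G S x y) : x ∉ S := by
  obtain ⟨p, hp⟩ := h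
  exact hp x p.start_mem_support

lemma of_mem_support [DecidableEq V] {p : G.Walk x y} (hp : ∀ w ∈ p.support, w ∉ S)
    (hz : z ∈ p.support) : ReachableAvoiding G S z y :=
  ⟨p.dropUntil z hz, fun w hw => hp w (p.support_dropUntil_subset_support hz hw)⟩

end ReachableAvoiding

lemma Separates.symm {S : Set V} {u v : V} (h : Separates G u v S) : Separates G v u S := by
  intro p
  simpa using h p.reverse

lemma separates_neighborSet {x y : V} (hxy : x ≠ y) : Separates G x y (G.neighborSet x) := by
  rintro (_ | ⟨h, _⟩)
  · exact absurd rfl hxy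
  · exact ⟨_, by simp, h⟩

lemma Separates.exists_isMinimalUVSeparator_subset [Finite V] {T : Set V} {x y : V}
    (h : Separates G x y T) (hxy : x ≠ y) (hadj : ¬ G.Adj x y) (hx : x ∉ T) (hy : y ∉ T) :
    ∃ S ⊆ T, IsMinimalUVSeparator G x y S := by
  obtain ⟨S, hST, hS⟩ := exists_minimal_le_of_wellFoundedLT (Separates G x y) T h
  exact ⟨S, hST, hxy, hadj, fun h => hx (hST h), fun h => hy (hST h), hS.prop,
    fun S' hS' => hS.not_prop_of_lt hS'⟩

namespace IsMinimalUVSeparator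

variable {S : Set V} {u v : V}

lemma symm (h : IsMinimalUVSeparator G u v S) : IsMinimalUVSeparator G v u S := by
  obtain ⟨huv, hadj, hu, hv, hsep, hmin⟩ := h
  exact ⟨huv.symm, fun h => hadj h.symm, hv, hu, hsep.symm,
    fun S' hS' h => hmin S' hS' h.symm⟩

lemma not_reachableAvoiding_both (h : IsMinimalUVSeparator G u v S) {x : V}
    (hu : ReachableAvoiding G S x u) (hv : ReachableAvoiding G S x v) : False := by
  obtain ⟨p, hp⟩ := hu
  obtain ⟨q, hq⟩ := hv
  obtain ⟨z, hz, hzS⟩ := h.2.2.2.2.1 (p.reverse.append q)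
  rw [Walk.mem_support_append_iff, Walk.support_reverse, List.mem_reverse] at hz
  exact hz.elim (hp z · hzS) (hq z · hzS)

lemma exists_adj_reachableAvoiding [DecidableEq V] (h : IsMinimalUVSeparator G u v S) {a : V}
    (ha : a ∈ S) : ∃ w, G.Adj a w ∧ ReachableAvoiding G S w v := by
  obtain ⟨p, hp⟩ : ∃ p : G.Walk u v, ∀ z ∈ p.support, z ∈ S → z = a := by
    have := h.2.2.2.2.2 (S \ {a}) (Set.sdiff_singleton_ssubset.mpr ha)
    simp only [Separates, not_forall, not_exists, not_and] at this
    obtain ⟨p, hp⟩ := this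
    exact ⟨p, fun z hz hzS => by simpa [hzS] using hp z hz⟩
  have hap : a ∈ p.support := by
    obtain ⟨z, hz, hzS⟩ := h.2.2.2.2.1 p
    rwa [← hp z hz hzS]
  -- a path from `a` to `v` inside `p` meets `S` only at its start, so its tail avoids `S`
  have hq := (p.dropUntil a hap).bypass_isPath
  have hqp : (p.dropUntil a hap).bypass.support ⊆ p.support := fun z hz =>
    p.support_dropUntil_subset_support hap ((p.dropUntil a hap).support_bypass_subset_support hz)
  generalize (p.dropUntil a hap).bypass = q at hq hqp
  cases q with
  | nil => exact absurd ha h.2.2.2.1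
  | cons hadj r =>
    rw [Walk.cons_isPath_iff] at hq
    refine ⟨_, hadj, r, fun z hz hzS => hq.2 ?_⟩
    rwa [← hp z (hqp (by simp [hz])) hzS]

end IsMinimalUVSeparator

lemma Chordal.adj_or_adj_of_cycle_four (hG : Chordal G) {a b c d : V} (hab : G.Adj a b)
    (hbc : G.Adj b c) (hcd : G.Adj c d) (hda : G.Adj d a) (hac : a ≠ c) (hbd : b ≠ d) :
    G.Adj a c ∨ G.Adj b d := by
  by_contra! h
  refine hG 4 le_rfl ⟨⟨![a, b, c, d], ?_⟩, ?_⟩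
  · intro i j hij
    fin_cases i <;> fin_cases j <;> simp_all [G.ne_of_adj, (G.ne_of_adj _).symm]
  · intro i j
    change _ ↔ G.Adj (![a, b, c, d] i) (![a, b, c, d] j)
    fin_cases i <;> fin_cases j <;>
      simp +decide [G.adj_comm, hab, hbc, hcd, hda.symm, h.1, h.2]

def AreTrueTwins (G : SimpleGraph V) (a b : V) : Prop :=
  G.Adj a b ∧ ∀ x, x ≠ a → x ≠ b → (G.Adj x a ↔ G.Adj x b)

namespace AreTrueTwins

variable [Fintype V] [DecidableEq V] [DecidableRel G.Adj] {a b : V}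

lemma degree_eq (h : AreTrueTwins G a b) : G.degree a = G.degree b := by
  have herase : (G.neighborFinset a).erase b = (G.neighborFinset b).erase a := by
    ext x
    simp only [Finset.mem_erase, mem_neighborFinset]
    constructor
    · rintro ⟨hxb, hax⟩
      exact ⟨hax.ne', ((h.2 x hax.ne' hxb).mp hax.symm).symm⟩
    · rintro ⟨hxa, hbx⟩
      exact ⟨hbx.ne', ((h.2 x hxa hbx.ne').mpr hbx.symm).symm⟩
  have hab := congrArg Finset.card herase
  rw [Finset.card_erase_of_mem ((mem_neighborFinset ..).mpr h.1),
    Finset.card_erase_of_mem ((mem_neighborFinset ..).mpr h.1.symm),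
    card_neighborFinset_eq_degree, card_neighborFinset_eq_degree] at hab
  have := G.degree_pos_iff_exists_adj a |>.mpr ⟨b, h.1⟩
  have := G.degree_pos_iff_exists_adj b |>.mpr ⟨a, h.1.symm⟩
  omega

lemma lapMatrix_mulVec_single_sub_single {R : Type*} [Ring R] (h : AreTrueTwins G a b) :
    G.lapMatrix R *ᵥ (Pi.single a 1 - Pi.single b 1) =
      ((G.degree a : R) + 1) • (Pi.single a 1 - Pi.single b 1) := by
  funext i
  simp only [lapMatrix_mulVec_apply, Pi.sub_apply, Finset.sum_sub_distrib, Finset.sum_pi_single',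
    mem_neighborFinset, Pi.smul_apply, smul_eq_mul]
  by_cases hia : i = a
  · subst hia
    simp [h.1, h.1.ne]
  by_cases hib : i = b
  · subst hib
    simp [h.1.symm, h.1.ne, h.degree_eq]
    abel
  · simp [hia, hib, h.2 i hia hib, G.adj_comm]

end AreTrueTwins

namespace StrictlyChordal

variable [Finite V] {S : Set V} {a b : V}

lemma adj_of_adj_of_mem_separator (hG : StrictlyChordal G) (hS : IsMinimalVertexSeparator G S)
    (ha : a ∈ S) (hb : b ∈ S) {x : V} (hx : x ∉ S) (hxa : G.Adj x a) : G.Adj x b := by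
  classical
  -- `x` reaches at most one of `u, v` in `G - S`; call the other one `v`.
  obtain ⟨u, v, huv⟩ := hS
  wlog hxv : ¬ ReachableAvoiding G S x v generalizing u v
  · exact this v u huv.symm fun hxu => huv.not_reachableAvoiding_both hxu (not_not.mp hxv)
  have hvS : v ∉ S := huv.2.2.2.1
  have hxv' : x ≠ v := by rintro rfl; exact hxv (.refl hx)
  have hadj : ¬ G.Adj x v := fun h => hxv ((ReachableAvoiding.refl hvS).cons h hx)
  obtain ⟨T, hTN, hT⟩ := (separates_neighborSet (G := G) hxv').exists_isMinimalUVSeparator_subset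
    hxv' hadj (G.notMem_neighborSet_self) hadj
  by_contra hxb
  have hTS : Disjoint T S := hG.2 T S ⟨x, v, hT⟩ ⟨u, v, huv⟩ fun h => hxb (hTN (h ▸ hb))
  obtain ⟨w, haw, r, hr⟩ := huv.exists_adj_reachableAvoiding ha
  obtain ⟨z, hz, hzT⟩ := hT.2.2.2.2.1 (.cons hxa (.cons haw r))
  simp only [Walk.support_cons, List.mem_cons] at hz
  obtain rfl | rfl | hz := hz
  · exact G.irrefl (hTN hzT)
  · exact Set.disjoint_left.mp hTS hzT ha
  · exact hxv ((ReachableAvoiding.of_mem_support hr hz).cons (hTN hzT) hx)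

lemma adj_of_mem_separator (hG : StrictlyChordal G) (hS : IsMinimalVertexSeparator G S)
    (ha : a ∈ S) (hb : b ∈ S) (hab : a ≠ b) : G.Adj a b := by
  classical
  obtain ⟨u, v, huv⟩ := hS
  obtain ⟨w, hbw, hwu⟩ := huv.symm.exists_adj_reachableAvoiding hb
  obtain ⟨w', hbw', hw'v⟩ := huv.exists_adj_reachableAvoiding hb
  have haw : G.Adj w a :=
    hG.adj_of_adj_of_mem_separator ⟨u, v, huv⟩ hb ha hwu.notMem_left hbw.symm
  have haw' : G.Adj w' a :=
    hG.adj_of_adj_of_mem_separator ⟨u, v, huv⟩ hb ha hw'v.notMem_left hbw'.symm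
  have hww' : w ≠ w' := by
    rintro rfl
    exact huv.not_reachableAvoiding_both hwu hw'v
  have hnww' : ¬ G.Adj w w' := fun h =>
    huv.not_reachableAvoiding_both hwu (hw'v.cons h hwu.notMem_left)
  exact (hG.1.adj_or_adj_of_cycle_four haw.symm hbw.symm hbw' haw' hab hww').resolve_right hnww'

lemma areTrueTwins_of_mem_separator (hG : StrictlyChordal G) (hS : IsMinimalVertexSeparator G S)
    (ha : a ∈ S) (hb : b ∈ S) (hab : a ≠ b) : AreTrueTwins G a b := by
  refine ⟨hG.adj_of_mem_separator hS ha hb hab, fun x hxa hxb => ?_⟩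
  by_cases hx : x ∈ S
  · exact iff_of_true (hG.adj_of_mem_separator hS hx ha hxa)
      (hG.adj_of_mem_separator hS hx hb hxb)
  · exact ⟨hG.adj_of_adj_of_mem_separator hS ha hb hx,
      hG.adj_of_adj_of_mem_separator hS hb ha hx⟩

end StrictlyChordal

lemma linearIndependent_single_sub_single {ι R : Type*} [DecidableEq ι] [Ring R] {v : ι}
    {T : Set ι} (hv : v ∉ T) :
    LinearIndependent R fun w : T => (Pi.single v 1 - Pi.single (w : ι) 1 : ι → R) := by
  rw [linearIndependent_iff']
  intro s g hg w hw
  have := congrFun hg w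
  simp only [Finset.sum_apply, Pi.smul_apply, Pi.sub_apply, Pi.single_apply, smul_eq_mul,
    Pi.zero_apply, mul_sub] at this
  simpa [ne_of_mem_of_not_mem w.2 hv, Subtype.coe_inj, hw, eq_comm] using this

lemma Submodule.ncard_le_finrank_of_linearIndependent {ι R M : Type*} [Ring R]
    [StrongRankCondition R] [AddCommGroup M] [Module R M] (p : Submodule R M) [Module.Finite R p]
    {T : Set ι} {f : ι → M} (hf : LinearIndependent R fun i : T => f i)
    (hp : ∀ i ∈ T, f i ∈ p) : T.ncard ≤ Module.finrank R p := by
  have hf' : LinearIndependent R fun i : T => (⟨f i, hp i i.2⟩ : p) :=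
    LinearIndependent.of_comp p.subtype hf
  have := hf'.finite
  have := Fintype.ofFinite T
  rw [Set.ncard_eq_toFinset_card', Set.toFinset_card]
  exact hf'.fintype_card_le_finrank

end

theorem stmt_11_general {V : Type*} [Fintype V] [DecidableEq V] (G : SimpleGraph V)
    [DecidableRel G.Adj] (hsc : StrictlyChordal G) (S : Set V)
    (hS : IsMinimalVertexSeparator G S) (v : V) (hv : v ∈ S) :
    S.ncard - 1 ≤ lapMult G ((G.degree v : ℝ) + 1) := by
  have hindep := linearIndependent_single_sub_single (R := ℝ) (v := v) (T := S \ {v}) (by simp)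
  have heigen : ∀ w ∈ S \ {v}, Pi.single v 1 - Pi.single w 1 ∈
      Module.End.eigenspace (Matrix.toLin' (G.lapMatrix ℝ)) ((G.degree v : ℝ) + 1) := by
    intro w hw
    rw [Module.End.mem_eigenspace_iff, Matrix.toLin'_apply]
    exact (hsc.areTrueTwins_of_mem_separator hS hv hw.1
      (Ne.symm hw.2)).lapMatrix_mulVec_single_sub_single
  rw [← Set.ncard_sdiff_singleton_of_mem hv]
  exact Submodule.ncard_le_finrank_of_linearIndependent _ hindep heigen

/-- In a strictly chordal graph, for a minimal vertex separator `S` with `|S| ≥ 2` and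
`v ∈ S`, `d(v) + 1` is a Laplacian eigenvalue of multiplicity at least `|S| - 1`. -/
theorem stmt_11 {V : Type*} [Fintype V] [DecidableEq V] (G : SimpleGraph V)
    [DecidableRel G.Adj] (hsc : StrictlyChordal G) (S : Set V)
    (hS : IsMinimalVertexSeparator G S) (h2 : 2 ≤ S.ncard) (v : V) (hv : v ∈ S) :
    S.ncard - 1 ≤ lapMult G ((G.degree v : ℝ) + 1) :=
  stmt_11_general G hsc S hS v hv
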